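/- arXiv:math/0611236 — 2 statements merged into one kernel-verified Lean document; each statement's English description precedes it below -/
import Mathlib

section
/- Let R be a positive integer coprime to a prime p, and let d(x) be a polynomial with coefficients in (1/R)·ℤ of degree at most k. Suppose that d takes integer values on all integers. If N = p^n · d(m/p) is a positive integer for some integers m and n with n ≥ k, then N is divisible by p^(n−k). -/
/-- Let `R` be a positive integer coprime to a prime `p`, and let `d` be a
polynomial with coefficients in `(1/R)·ℤ` of degree at most `k`, taking integer values on
all integers.  If `N = p^n · d(m/p)` is a positive integer for integers `m, n` with
`n ≥ k`, then `p^(n-k)` divides `N`. -/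
theorem stmt0 (p R k n : ℕ) (hp : p.Prime) (hR : 0 < R) (hcop : Nat.Coprime R p)
    (d : Polynomial ℚ) (hdeg : d.natDegree ≤ k)
    (hcoeff : ∀ i : ℕ, ∃ z : ℤ, d.coeff i = (z : ℚ) / (R : ℚ))
    (hint : ∀ z : ℤ, ∃ w : ℤ, d.eval (z : ℚ) = (w : ℚ))
    (hnk : k ≤ n) (m : ℤ) (N : ℕ) (hN : 0 < N)
    (hval : (N : ℚ) = (p : ℚ) ^ n * d.eval ((m : ℚ) / (p : ℚ))) :
    p ^ (n - k) ∣ N := by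
  choose zc hzc using hcoeff
  have hp0 : (p : ℚ) ≠ 0 := by exact_mod_cast hp.pos.ne'
  have hR0 : (R : ℚ) ≠ 0 := by exact_mod_cast hR.ne'
  set z : ℤ := ∑ i ∈ Finset.range (k + 1), zc i * (p : ℤ) ^ (k - i) * m ^ i with hz
  have heval : d.eval ((m : ℚ) / (p : ℚ)) =
      ∑ i ∈ Finset.range (k + 1), d.coeff i * ((m : ℚ) / (p : ℚ)) ^ i :=
    Polynomial.eval_eq_sum_range' (Nat.lt_succ_of_le hdeg) _
  have key : (R : ℚ) * (p : ℚ) ^ k * d.eval ((m : ℚ) / (p : ℚ)) = (z : ℚ) := by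
    rw [heval, Finset.mul_sum, hz]
    push_cast
    refine Finset.sum_congr rfl fun i hi => ?_
    have hik : i ≤ k := Nat.lt_succ_iff.mp (Finset.mem_range.mp hi)
    rw [hzc i]
    field_simp
    have hpk : (p : ℚ) ^ k = (p : ℚ) ^ (k - i) * (p : ℚ) ^ i := by
      rw [← pow_add, Nat.sub_add_cancel hik]
    have hpi : (p : ℚ) ^ i * ((p : ℚ)⁻¹) ^ i = 1 := by
      rw [← mul_pow, mul_inv_cancel₀ hp0, one_pow]
    rw [hpk]; linear_combination ((p : ℚ) ^ (k - i) * (zc i : ℚ) * (m : ℚ) ^ i) * hpi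
  have hmain : ((R : ℤ) * N : ℚ) = ((p : ℤ) ^ (n - k) * z : ℚ) := by
    push_cast
    rw [← key, hval]
    have : (p : ℚ) ^ n = (p : ℚ) ^ (n - k) * (p : ℚ) ^ k := by
      rw [← pow_add, Nat.sub_add_cancel hnk]
    rw [this]; ring
  have hmainZ : (R : ℤ) * N = (p : ℤ) ^ (n - k) * z := by exact_mod_cast hmain
  have hdvd : (p : ℤ) ^ (n - k) ∣ (R : ℤ) * N := ⟨z, hmainZ⟩
  have hcop' : IsCoprime ((p : ℤ) ^ (n - k)) (R : ℤ) := by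
    apply IsCoprime.pow_left
    exact_mod_cast (Nat.isCoprime_iff_coprime.mpr hcop.symm)
  have : (p : ℤ) ^ (n - k) ∣ (N : ℤ) := hcop'.dvd_of_dvd_mul_left hdvd
  exact_mod_cast this
end

section
/- Let d be a polynomial of degree ≤ k with rational coefficients whose denominators divide R, with gcd(R, p) = 1, and suppose d(n) ∈ ℤ for all n ∈ ℤ. If M is a finite-dimensional vector space whose dimension equals p^n · d((m+r)/p) for integers m, r and n ≥ dim-bound k, then p^(n−k) divides dim M. -/
/-- De Concini–Kac–Procesi packaging: Let `d` be a polynomial of degree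
`≤ k` with rational coefficients whose denominators divide `R`, with `gcd(R, p) = 1`,
taking integer values on `ℤ`.  If `M` is a finite-dimensional vector space whose
dimension equals `p^n · d((m + r)/p)` for integers `m, r` and `n ≥ k`, then
`p^(n-k)` divides `dim M`. -/
theorem stmt10 (p R k n : ℕ) (hp : p.Prime) (hR : 0 < R) (hcop : Nat.Coprime R p)
    (d : Polynomial ℚ) (hdeg : d.natDegree ≤ k)
    (hcoeff : ∀ i : ℕ, ∃ z : ℤ, d.coeff i = (z : ℚ) / (R : ℚ))
    (hint : ∀ z : ℤ, ∃ w : ℤ, d.eval (z : ℚ) = (w : ℚ))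
    (hnk : k ≤ n) (m r : ℤ)
    (K : Type) [Field K] (M : Type) [AddCommGroup M] [Module K M]
    [FiniteDimensional K M]
    (hdim : (Module.finrank K M : ℚ) = (p : ℚ) ^ n * d.eval (((m : ℚ) + r) / p)) :
    p ^ (n - k) ∣ Module.finrank K M := by
  choose a ha using hcoeff
  set N := Module.finrank K M with hN
  have hp0 : (p : ℚ) ≠ 0 := by exact_mod_cast hp.pos.ne'
  have hR0 : (R : ℚ) ≠ 0 := by exact_mod_cast hR.ne'
  have key : (R * N : ℤ) = ∑ i ∈ Finset.range (k + 1),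
      a i * (m + r) ^ i * (p : ℤ) ^ (n - i) := by
    have hq : ((R * N : ℤ) : ℚ) = ∑ i ∈ Finset.range (k + 1),
        (a i : ℚ) * ((m : ℚ) + r) ^ i * (p : ℚ) ^ (n - i) := by
      push_cast
      rw [hdim, Polynomial.eval_eq_sum_range' (Nat.lt_succ_of_le hdeg),
        Finset.mul_sum, Finset.mul_sum]
      refine Finset.sum_congr rfl ?_
      intro i hi
      have hin : i ≤ n := le_trans (Nat.le_of_lt_succ (Finset.mem_range.mp hi)) hnk
      have hpow : (p : ℚ) ^ n = (p : ℚ) ^ (n - i) * (p : ℚ) ^ i := by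
        rw [← pow_add, Nat.sub_add_cancel hin]
      rw [ha i, div_pow, hpow]
      field_simp
    exact_mod_cast hq
  have hdvd : ((p : ℤ) ^ (n - k)) ∣ (R * N : ℤ) := by
    rw [key]
    refine Finset.dvd_sum ?_
    intro i hi
    have hik : i ≤ k := Nat.le_of_lt_succ (Finset.mem_range.mp hi)
    have : (p : ℤ) ^ (n - i) = (p : ℤ) ^ (n - k) * (p : ℤ) ^ (k - i) := by
      rw [← pow_add]
      congr 1
      omega
    rw [this]
    exact dvd_mul_of_dvd_right (dvd_mul_right _ _) _
  have hnat : p ^ (n - k) ∣ R * N := by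
    have := hdvd
    rw [show ((p : ℤ) ^ (n - k)) = ((p ^ (n - k) : ℕ) : ℤ) by push_cast; ring,
      show (R * N : ℤ) = ((R * N : ℕ) : ℤ) by push_cast; ring] at this
    exact_mod_cast this
  exact (Nat.Coprime.pow_left _ hcop.symm).dvd_of_dvd_mul_left hnat
end
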